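/- arXiv:2202.10822 — 4 statements merged into one kernel-verified Lean document; each statement's English description precedes it below -/
import Mathlib

section
/- Let K be a convex body in n-dimensional Euclidean space and suppose K + v₁, …, K + v_k are translates of K whose interiors are pairwise disjoint and which each have a common point with K but interiors disjoint from the interior of K. Then k ≤ 3^n − 1. -/
/-!
Let `B` be the interior of `K` and `S = B - B`, an open convex symmetric set with `S - S = 2 • S`.
Adjoin `v₀ = 0` to the centres. Two translates `a + K`, `b + K` have disjoint interiors exactly
when `a - b ∉ S`, i.e. when `2a + S` and `2b + S` are disjoint; touching means `a ∈ K - K`, and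
then `2a + S ⊆ 3 • S`. So `k + 1` disjoint translates of `S` fit into `3 • S`, and comparing
volumes gives `k + 1 ≤ 3 ^ n`.
-/

open Function Pointwise MeasureTheory Set

lemma disjoint_vadd_set_iff_sub_notMem_sub {G : Type*} [AddCommGroup G] {s : Set G} {a b : G} :
    Disjoint (a +ᵥ s) (b +ᵥ s) ↔ a - b ∉ s - s := by
  rw [Set.disjoint_left]
  simp only [mem_vadd_set, mem_sub, vadd_eq_add]
  constructor
  · rintro h ⟨x, hx, y, hy, hxy⟩
    rw [sub_eq_sub_iff_add_eq_add] at hxy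
    exact h ⟨y, hy, rfl⟩ ⟨x, hx, by rw [add_comm, hxy]⟩
  · rintro h _ ⟨x, hx, rfl⟩ ⟨y, hy, hxy⟩
    exact h ⟨y, hy, x, hx, by rw [sub_eq_sub_iff_add_eq_add, add_comm, hxy]⟩

lemma Fin.pairwise_cons {α : Type*} {r : α → α → Prop} [Std.Symm r] {k : ℕ} {a : α}
    {f : Fin k → α} (ha : ∀ i, r a (f i)) (hf : Pairwise (r on f)) :
    Pairwise (r on (Fin.cons a f : Fin (k + 1) → α)) := by
  intro i j hij
  induction i using Fin.cases <;> induction j using Fin.cases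
  · exact absurd rfl hij
  · exact ha _
  · exact Std.Symm.symm _ _ (ha _)
  · exact hf (ne_of_apply_ne Fin.succ hij)

section Convex

variable {𝕜 E : Type*} [Field 𝕜] [LinearOrder 𝕜] [IsStrictOrderedRing 𝕜] [AddCommGroup E]
  [Module 𝕜 E] {s : Set E}

lemma Convex.sub_sub_sub_eq_two_smul (hs : Convex 𝕜 s) :
    s - s - (s - s) = (2 : 𝕜) • (s - s) := by
  have hdouble : s + s = (2 : 𝕜) • s := by
    simpa [one_add_one_eq_two] using (hs.add_smul (zero_le_one' 𝕜) (zero_le_one' 𝕜)).symm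
  rw [sub_sub_sub_eq, hdouble, sub_eq_add_neg, sub_eq_add_neg, smul_add, smul_set_neg]

lemma Convex.disjoint_vadd_iff_disjoint_two_smul_vadd_sub (hs : Convex 𝕜 s) {a b : E} :
    Disjoint (a +ᵥ s) (b +ᵥ s) ↔
      Disjoint ((2 : 𝕜) • a +ᵥ (s - s)) ((2 : 𝕜) • b +ᵥ (s - s)) := by
  rw [disjoint_vadd_set_iff_sub_notMem_sub, disjoint_vadd_set_iff_sub_notMem_sub, ← smul_sub,
    hs.sub_sub_sub_eq_two_smul, smul_mem_smul_set_iff₀ two_ne_zero]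

end Convex

lemma Convex.two_smul_vadd_sub_interior_subset {E : Type*} [AddCommGroup E] [Module ℝ E]
    [TopologicalSpace E] [IsTopologicalAddGroup E] [ContinuousConstSMul ℝ E] {s : Set E}
    (hs : Convex ℝ s) {a : E} (ha : a ∈ s - s) :
    (2 : ℝ) • a +ᵥ (interior s - interior s) ⊆ (3 : ℝ) • (interior s - interior s) := by
  rintro _ ⟨_, ⟨b, hb, b', hb', rfl⟩, rfl⟩
  obtain ⟨x, hx, y, hy, rfl⟩ := ha
  have hcombo {p q : E} (hp : p ∈ s) (hq : q ∈ interior s) :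
      (2 / 3 : ℝ) • p + (1 / 3 : ℝ) • q ∈ interior s :=
    hs.combo_self_interior_mem_interior hp hq (by norm_num) (by norm_num) (by norm_num)
  refine ⟨_, sub_mem_sub (hcombo hx hb) (hcombo hy hb'), ?_⟩
  simp only [vadd_eq_add]
  module

lemma card_le_pow_finrank_of_pairwise_disjoint_vadd_subset_smul {E : Type*}
    [NormedAddCommGroup E] [NormedSpace ℝ E] [MeasurableSpace E] [BorelSpace E]
    [FiniteDimensional ℝ E] (μ : Measure E) [μ.IsAddHaarMeasure] {ι : Type*} [Fintype ι]
    {s : Set E} (hs : MeasurableSet s) (hs₀ : μ s ≠ 0) (hs_top : μ s ≠ ⊤) {R : ℝ} (hR : 0 ≤ R)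
    {c : ι → E} (hdisj : Pairwise (Disjoint on fun i => c i +ᵥ s))
    (hsub : ∀ i, c i +ᵥ s ⊆ R • s) :
    (Fintype.card ι : ℝ) ≤ R ^ Module.finrank ℝ E := by
  have hvol : ∑ i, μ (c i +ᵥ s) ≤ μ (R • s) := by
    rw [← tsum_fintype (L := .unconditional _),
      ← measure_iUnion hdisj fun i => hs.const_vadd (c i)]
    exact measure_mono (iUnion_subset hsub)
  simp only [measure_vadd, Finset.sum_const, Finset.card_univ, nsmul_eq_mul,
    Measure.addHaar_smul_of_nonneg μ hR] at hvol
  rw [ENNReal.mul_le_mul_iff_left hs₀ hs_top, ← ENNReal.ofReal_natCast,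
    ENNReal.ofReal_le_ofReal_iff (by positivity)] at hvol
  exact hvol

/-- **Hadwiger's theorem.** If `k` translates of an `n`-dimensional convex body `K`
have pairwise disjoint interiors and each touches `K` (has a common point with `K`
but interior disjoint from the interior of `K`), then `k ≤ 3^n - 1`. -/
theorem hadwiger_kissing_bound (n k : ℕ)
    (K : Set (EuclideanSpace ℝ (Fin n)))
    (hKcomp : IsCompact K) (hKconv : Convex ℝ K) (hKint : (interior K).Nonempty)
    (v : Fin k → EuclideanSpace ℝ (Fin n))
    (hpair : ∀ i j : Fin k, i ≠ j →
      Disjoint (interior (v i +ᵥ K)) (interior (v j +ᵥ K)))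
    (htouch : ∀ i : Fin k, ((v i +ᵥ K) ∩ K).Nonempty)
    (hnonoverlap : ∀ i : Fin k, Disjoint (interior (v i +ᵥ K)) (interior K)) :
    k ≤ 3 ^ n - 1 := by
  let w : Fin (k + 1) → EuclideanSpace ℝ (Fin n) := Fin.cons 0 v
  have hw_mem : ∀ i, w i ∈ K - K := by
    refine Fin.cases (hKint.mono interior_subset).zero_mem_sub fun i => ?_
    obtain ⟨a, b, ⟨ha, hb⟩, hab⟩ := vadd_inter_nonempty_iff'.mp (htouch i)
    exact ⟨a, ha, b, hb, hab⟩
  have hw_disj : Pairwise (Disjoint on fun i => w i +ᵥ interior K) := by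
    rw [show (fun i => w i +ᵥ interior K) = (· +ᵥ interior K) ∘ w from rfl, Fin.comp_cons,
      zero_vadd]
    refine Fin.pairwise_cons (fun i => ?_) fun i j hij => ?_
    · simpa only [comp_apply, ← interior_vadd] using (hnonoverlap i).symm
    · simpa only [onFun, comp_apply, ← interior_vadd] using hpair i j hij
  set S := interior K - interior K
  have hS_open : IsOpen S := isOpen_interior.sub_left
  have hS_bdd : Bornology.IsBounded S :=
    (hKcomp.isBounded.sub hKcomp.isBounded).subset (sub_subset_sub interior_subset interior_subset)
  have hcard := card_le_pow_finrank_of_pairwise_disjoint_vadd_subset_smul volume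
    hS_open.measurableSet (hS_open.measure_pos volume (hKint.sub hKint)).ne'
    hS_bdd.measure_lt_top.ne (by norm_num : (0 : ℝ) ≤ 3) (c := fun i => (2 : ℝ) • w i)
    (fun _ _ hij => hKconv.interior.disjoint_vadd_iff_disjoint_two_smul_vadd_sub.mp (hw_disj hij))
    (fun i => hKconv.two_smul_vadd_sub_interior_subset (hw_mem i))
  rw [Fintype.card_fin, finrank_euclideanSpace_fin] at hcard
  have : k + 1 ≤ 3 ^ n := by exact_mod_cast hcard
  omega
end

section
/- Let O = {x ∈ ℝ³ : |x₁| + |x₂| + |x₃| ≤ 1} be the regular octahedron. The maximum number k for which there exist translates O + v₁, …, O + v_k with pairwise disjoint interiors, each having a common point with O but interior disjoint from the interior of O, is exactly 18. -/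
/-!
The kissing translates of a norm ball `B` of radius 1 are the balls `v + B` with `‖v‖ = 2`, and
two of them overlap exactly when their centres are closer than 2. For the octahedron (the unit
ball of `ℓ¹`) the problem is therefore to place as many points as possible on the `ℓ¹`-sphere of
radius 2 at mutual `ℓ¹`-distance at least 2. The six points `±2eᵢ` and the twelve points
`±eᵢ ± eⱼ` do this. Conversely the sphere is covered by 18 pieces, one around each of these
points, each of `ℓ¹`-diameter strictly less than 2, so by pigeonhole no 19 points fit.
-/

open Metric Pointwise Set

section Kissing

variable {E F : Type*} [AddCommGroup E] [Module ℝ E] [TopologicalSpace E]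
  [NormedAddCommGroup F] [NormedSpace ℝ F]

def IsKissingConfig {ι : Type*} (K : Set E) (v : ι → E) : Prop :=
  (∀ i j, i ≠ j → Disjoint (interior (v i +ᵥ K)) (interior (v j +ᵥ K))) ∧
    ∀ i, ((v i +ᵥ K) ∩ K).Nonempty ∧ Disjoint (interior (v i +ᵥ K)) (interior K)

lemma vadd_preimage_closedBall (e : E ≃L[ℝ] F) (v : E) (c : F) (r : ℝ) :
    v +ᵥ e ⁻¹' closedBall c r = e ⁻¹' closedBall (e v + c) r := by
  ext x
  simp [mem_vadd_set_iff_neg_vadd_mem, dist_eq_norm, sub_eq_add_neg, add_comm, add_left_comm]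

omit [AddCommGroup E] [Module ℝ E] in
lemma interior_preimage_closedBall (e : E ≃ₜ F) (c : F) {r : ℝ} (hr : r ≠ 0) :
    interior (e ⁻¹' closedBall c r) = e ⁻¹' ball c r := by
  rw [← e.preimage_interior, interior_closedBall c hr]

theorem isKissingConfig_preimage_closedBall_iff (e : E ≃L[ℝ] F) {r : ℝ} (hr : 0 < r)
    {ι : Type*} (v : ι → E) :
    IsKissingConfig (e ⁻¹' closedBall 0 r) v ↔
      (Pairwise fun i j ↦ 2 * r ≤ dist (e (v i)) (e (v j))) ∧ ∀ i, ‖e (v i)‖ = 2 * r := by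
  have hint := fun c ↦ interior_preimage_closedBall e.toHomeomorph c hr.ne'
  simp only [ContinuousLinearEquiv.coe_toHomeomorph] at hint
  simp only [IsKissingConfig, vadd_preimage_closedBall, add_zero, hint, ← preimage_inter,
    e.surjective.nonempty_preimage, disjoint_preimage_iff e.surjective,
    disjoint_ball_ball_iff hr hr, ← not_disjoint_iff_nonempty_inter,
    disjoint_closedBall_closedBall_iff hr.le hr.le, dist_zero_right, not_lt, ← two_mul]
  exact and_congr Iff.rfl (forall_congr' fun i ↦ le_antisymm_iff.symm)

theorem setOf_isKissingConfig_preimage_closedBall (e : E ≃L[ℝ] F) {r : ℝ} (hr : 0 < r) :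
    {k : ℕ | ∃ v : Fin k → E, IsKissingConfig (e ⁻¹' closedBall 0 r) v} =
      {k : ℕ | ∃ w : Fin k → F,
        (Pairwise fun i j ↦ 2 * r ≤ dist (w i) (w j)) ∧ ∀ i, ‖w i‖ = 2 * r} := by
  ext k
  simp only [mem_ofPred_eq, isKissingConfig_preimage_closedBall_iff e hr]
  constructor
  · rintro ⟨v, hv⟩
    exact ⟨e ∘ v, hv⟩
  · rintro ⟨w, hw⟩
    exact ⟨e.symm ∘ w, by simpa using hw⟩

end Kissing

local notation "ℓ¹³" => PiLp 1 (fun _ : Fin 3 ↦ ℝ)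

noncomputable def toL1 : EuclideanSpace ℝ (Fin 3) ≃L[ℝ] ℓ¹³ :=
  (PiLp.continuousLinearEquiv 2 ℝ _).trans (PiLp.continuousLinearEquiv 1 ℝ _).symm

lemma octahedron_eq_preimage_closedBall :
    {x : EuclideanSpace ℝ (Fin 3) | |x 0| + |x 1| + |x 2| ≤ 1} = toL1 ⁻¹' closedBall 0 1 := by
  ext x
  simp [PiLp.norm_eq_of_L1, Fin.sum_univ_three, toL1]

def kissingVectors : Fin 18 → Fin 3 → ℤ :=
  ![![2, 0, 0], ![-2, 0, 0], ![0, 2, 0], ![0, -2, 0], ![0, 0, 2], ![0, 0, -2],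
    ![1, 1, 0], ![1, -1, 0], ![-1, 1, 0], ![-1, -1, 0],
    ![1, 0, 1], ![1, 0, -1], ![-1, 0, 1], ![-1, 0, -1],
    ![0, 1, 1], ![0, 1, -1], ![0, -1, 1], ![0, -1, -1]]

lemma sum_abs_kissingVectors (i : Fin 18) : ∑ k, |kissingVectors i k| = 2 := by
  revert i; decide

lemma sum_abs_sub_kissingVectors : Pairwise fun i j ↦
    2 ≤ ∑ k, |kissingVectors i k - kissingVectors j k| := by
  unfold Pairwise; decide

theorem exists_eighteen_pairwise_two_le_dist : ∃ w : Fin 18 → ℓ¹³,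
    (Pairwise fun i j ↦ 2 ≤ dist (w i) (w j)) ∧ ∀ i, ‖w i‖ = 2 := by
  refine ⟨fun i ↦ WithLp.toLp 1 fun k ↦ (kissingVectors i k : ℝ), fun i j hij ↦ ?_, fun i ↦ ?_⟩
  · simp only [PiLp.dist_eq_of_L1, Real.dist_eq]
    exact_mod_cast sum_abs_sub_kissingVectors hij
  · simp only [PiLp.norm_eq_of_L1, Real.norm_eq_abs]
    exact_mod_cast sum_abs_kissingVectors i

lemma sum_fin_three_rotate {M : Type*} [AddCommMonoid M] (f : Fin 3 → M) (k : Fin 3) :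
    ∑ i, f i = f k + f (k + 1) + f (k + 2) := by
  fin_cases k <;> simp [Fin.sum_univ_three] <;> abel

lemma abs_sub_eq_abs_abs_sub_abs {a b : ℝ} (h : 0 ≤ a ↔ 0 ≤ b) : |a - b| = |(|a| - |b|)| := by
  rcases le_or_gt 0 a with ha | ha
  · rw [abs_of_nonneg ha, abs_of_nonneg (h.mp ha)]
  · rw [abs_of_neg ha, abs_of_neg (not_le.mp (mt h.mpr ha.not_ge)), ← abs_neg]
    ring_nf

lemma abs_sub_add_abs_sub_add_abs_sub_lt_two_of_vertex {a b c a' b' c' : ℝ}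
    (hsum : |a| + |b| + |c| = 2) (hsum' : |a'| + |b'| + |c'| = 2) (ha : 1 < |a|) (ha' : 1 < |a'|)
    (hsign : 0 ≤ a ↔ 0 ≤ a') :
    |a - a'| + |b - b'| + |c - c'| < 2 := by
  have hb := abs_sub b b'
  have hc := abs_sub c c'
  rw [abs_sub_eq_abs_abs_sub_abs hsign]
  rcases abs_cases (|a| - |a'|) with ⟨h, -⟩ | ⟨h, -⟩ <;> linarith

lemma abs_sub_add_abs_sub_add_abs_sub_lt_two_of_edge {p q r p' q' r' : ℝ}
    (hsum : |p| + |q| + |r| = 2) (hp : |p| ≤ 1) (hq : |q| ≤ 1) (hrp : |r| ≤ |p|) (hrq : |r| ≤ |q|)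
    (htie : |r| = |q| → |p| ≤ |q|)
    (hsum' : |p'| + |q'| + |r'| = 2) (hp' : |p'| ≤ 1) (hq' : |q'| ≤ 1) (hrp' : |r'| ≤ |p'|)
    (hrq' : |r'| ≤ |q'|) (htie' : |r'| = |q'| → |p'| ≤ |q'|)
    (hsp : 0 ≤ p ↔ 0 ≤ p') (hsq : 0 ≤ q ↔ 0 ≤ q') :
    |p - p'| + |q - q'| + |r - r'| < 2 := by
  -- With `|r - r'| ≤ |r| + |r'|`, the sum is at most `2|r'|`, `4 - 2(|q| + |p'|)`,
  -- `4 - 2(|p| + |q'|)` or `2|r|`. As `|q|, |p'| ≥ 1/2`, the second bound is 2 only at the tie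
  -- `|r| = |q| < |p| = 1`, and symmetrically for the third.
  have hr := abs_sub r r'
  rw [abs_sub_eq_abs_abs_sub_abs hsp, abs_sub_eq_abs_abs_sub_abs hsq]
  rcases abs_cases (|p| - |p'|) with ⟨hP, -⟩ | ⟨hP, -⟩ <;>
    rcases abs_cases (|q| - |q'|) with ⟨hQ, -⟩ | ⟨hQ, -⟩ <;> rw [hP, hQ]
  · linarith
  · by_contra! h
    linarith [htie (by linarith)]
  · by_contra! h
    linarith [htie' (by linarith)]
  · linarith

/- `a k` is a minimum, and a tie with `a (k + 2)` only counts when all three values agree. Ties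
must be broken consistently: `(1, ½, ½)` is on the border of the cells of `e₀ + e₁` and `e₀ + e₂`,
and at distance exactly 2 from `(½, 1, -½)` and `(½, -½, 1)`, which lie on the borders of those two
cells. -/
def IsCyclicMin {α : Type*} [LinearOrder α] (a : Fin 3 → α) (k : Fin 3) : Prop :=
  a k ≤ a (k + 1) ∧ a k ≤ a (k + 2) ∧ (a k = a (k + 2) → a (k + 1) ≤ a (k + 2))

lemma exists_isCyclicMin {α : Type*} [LinearOrder α] (a : Fin 3 → α) : ∃ k, IsCyclicMin a k := by
  by_contra! h
  have h0 := h 0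
  have h1 := h 1
  have h2 := h 2
  simp only [IsCyclicMin, Fin.reduceAdd] at h0 h1 h2
  grind

/-- `.inl (i, s)` is the piece around the vertex `±2eᵢ`, `.inr (k, s, t)` the one around the edge
midpoint `±e_{k+1} ± e_{k+2}`, the signs being given by `s` and `t`. -/
def cell : (Fin 3 × Bool) ⊕ (Fin 3 × Bool × Bool) → Set ℓ¹³
  | .inl (i, s) => {x | 1 < |x i| ∧ (0 ≤ x i ↔ s)}
  | .inr (k, s, t) => {x | (∀ i, |x i| ≤ 1) ∧ IsCyclicMin (fun i ↦ |x i|) k ∧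
      (0 ≤ x (k + 1) ↔ s) ∧ (0 ≤ x (k + 2) ↔ t)}

lemma exists_mem_cell (x : ℓ¹³) : ∃ L, x ∈ cell L := by
  by_cases h : ∃ i, 1 < |x i|
  · obtain ⟨i, hi⟩ := h
    exact ⟨.inl (i, decide (0 ≤ x i)), hi, by simp⟩
  · push Not at h
    obtain ⟨k, hk⟩ := exists_isCyclicMin fun i ↦ |x i|
    exact ⟨.inr (k, decide (0 ≤ x (k + 1)), decide (0 ≤ x (k + 2))), h, hk, by simp, by simp⟩

lemma dist_lt_two_of_mem_cell {x y : ℓ¹³} (hx : ‖x‖ = 2) (hy : ‖y‖ = 2)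
    {L : (Fin 3 × Bool) ⊕ (Fin 3 × Bool × Bool)} (hxL : x ∈ cell L) (hyL : y ∈ cell L) :
    dist x y < 2 := by
  simp only [PiLp.norm_eq_of_L1, PiLp.dist_eq_of_L1, Real.norm_eq_abs, Real.dist_eq] at hx hy ⊢
  rcases L with ⟨i, s⟩ | ⟨k, s, t⟩
  · obtain ⟨hxi, hxs⟩ := hxL
    obtain ⟨hyi, hys⟩ := hyL
    rw [sum_fin_three_rotate _ i] at hx hy ⊢
    exact abs_sub_add_abs_sub_add_abs_sub_lt_two_of_vertex hx hy hxi hyi (hxs.trans hys.symm)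
  · obtain ⟨hx1, ⟨hxk1, hxk2, hxtie⟩, hxs1, hxs2⟩ := hxL
    obtain ⟨hy1, ⟨hyk1, hyk2, hytie⟩, hys1, hys2⟩ := hyL
    rw [sum_fin_three_rotate _ k] at hx hy ⊢
    linarith [abs_sub_add_abs_sub_add_abs_sub_lt_two_of_edge (by linarith) (hx1 _) (hx1 _) hxk1
      hxk2 hxtie (by linarith) (hy1 _) (hy1 _) hyk1 hyk2 hytie (hxs1.trans hys1.symm)
      (hxs2.trans hys2.symm)]

theorem card_le_eighteen_of_pairwise_two_le_dist {ι : Type*} [Fintype ι] (w : ι → ℓ¹³)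
    (hw : ∀ i, ‖w i‖ = 2) (hsep : Pairwise fun i j ↦ 2 ≤ dist (w i) (w j)) :
    Fintype.card ι ≤ 18 := by
  choose L hL using fun i ↦ exists_mem_cell (w i)
  have hL_inj : L.Injective := fun i j hij ↦ by
    by_contra hne
    exact (hsep hne).not_gt (dist_lt_two_of_mem_cell (hw i) (hw j) (hL i) (hij ▸ hL j))
  simpa using Fintype.card_le_of_injective L hL_inj

/-- **Robins–Salowe, Talata, Larman–Zong.** The Hadwiger (translative kissing) number
of the regular octahedron `O = {x : |x₁| + |x₂| + |x₃| ≤ 1}` is exactly 18. -/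
theorem hadwiger_number_octahedron
    (O : Set (EuclideanSpace ℝ (Fin 3)))
    (hO : O = {x : EuclideanSpace ℝ (Fin 3) | |x 0| + |x 1| + |x 2| ≤ 1}) :
    IsGreatest {k : ℕ | ∃ v : Fin k → EuclideanSpace ℝ (Fin 3),
      (∀ i j, i ≠ j → Disjoint (interior (v i +ᵥ O)) (interior (v j +ᵥ O))) ∧
      (∀ i, ((v i +ᵥ O) ∩ O).Nonempty ∧ Disjoint (interior (v i +ᵥ O)) (interior O))}
      18 := by
  change IsGreatest {k : ℕ | ∃ v : Fin k → _, IsKissingConfig O v} 18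
  rw [hO, octahedron_eq_preimage_closedBall,
    setOf_isKissingConfig_preimage_closedBall toL1 one_pos, mul_one]
  refine ⟨exists_eighteen_pairwise_two_le_dist, ?_⟩
  rintro k ⟨w, hsep, hw⟩
  simpa using card_le_eighteen_of_pairwise_two_le_dist w hw hsep
end

section
/- Let M be a real normed vector space of finite dimension n, and let S ⊆ M be a set such that for some d > 0 all pairwise distances between distinct points of S equal d. Then S has at most 2^n points. -/
/-!
A volume argument. Let `T` be a finite set whose distinct points are at least `r` apart, and let
`D = diam T`. Put `T` inside an open body `U`: a thin thickening of its convex hull, so that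
`diam U ≤ D + 2ε`. The homothety of ratio `t` centred at a point of `T` maps `U` into itself. If
`t (D + 2ε) < (1 - t) r`, the images for different centres are disjoint. Comparing Haar measures
gives `|T| tⁿ ≤ 1`, and letting `t ↑ r / (r + D)` gives `|T| ≤ (1 + D / r)ⁿ`. For an equilateral
set `r = D = d`, so the bound is `2ⁿ`. Hence every finite subset of an equilateral set is that
small, and so the set itself is finite.
-/

open MeasureTheory Metric Bornology AffineMap Module Filter Topology

section

variable {E : Type*} [NormedAddCommGroup E] [NormedSpace ℝ E]

theorem dist_homothety_homothety (x a b : E) (t : ℝ) :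
    dist (homothety x t a) (homothety x t b) = |t| * dist a b := by
  rw [homothety_apply, homothety_apply, dist_vadd_cancel_right, dist_smul₀, Real.norm_eq_abs,
    dist_vsub_cancel_right]

theorem Convex.homothety_image_thickening_subset {K : Set E} (hK : Convex ℝ K) {x : E}
    (hx : x ∈ K) {t : ℝ} (ht₀ : 0 ≤ t) (ht₁ : t ≤ 1) (ε : ℝ) :
    homothety x t '' Metric.thickening ε K ⊆ Metric.thickening ε K := by
  rintro _ ⟨a, ha, rfl⟩
  obtain ⟨k, hk, hak⟩ := mem_thickening_iff.1 ha
  refine mem_thickening_iff.2 ⟨homothety x t k, ?_, ?_⟩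
  · rw [homothety_eq_lineMap]
    exact hK.lineMap_mem hx hk ⟨ht₀, ht₁⟩
  · rw [dist_homothety_homothety, abs_of_nonneg ht₀]
    nlinarith [dist_nonneg (x := a) (y := k)]

theorem disjoint_homothety_image {U : Set E} {D : ℝ} (hU : ∀ a ∈ U, ∀ b ∈ U, dist a b ≤ D)
    {x y : E} {r t : ℝ} (ht₀ : 0 < t) (ht₁ : t ≤ 1) (hxy : r ≤ dist x y)
    (hlt : t * D < (1 - t) * r) :
    Disjoint (homothety x t '' U) (homothety y t '' U) := by
  rw [Set.disjoint_left]
  rintro _ ⟨a, ha, rfl⟩ ⟨b, hb, hba⟩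
  have hmove : t • (b - a) = (1 - t) • (x - y) := by
    simp only [homothety_apply, vsub_eq_sub, vadd_eq_add] at hba
    linear_combination (norm := module) hba
  have hdist : t * dist b a = (1 - t) * dist x y := by
    simpa [dist_eq_norm, norm_smul, abs_of_pos ht₀, abs_of_nonneg (sub_nonneg.2 ht₁)]
      using congrArg norm hmove
  nlinarith [hU b hb a ha]

variable [FiniteDimensional ℝ E]

theorem card_mul_pow_finrank_le_one_of_pairwiseDisjoint_homothety {T : Finset E} {U : Set E}
    (hUo : IsOpen U) (hUne : U.Nonempty) (hUb : IsBounded U) {t : ℝ} (ht : 0 < t)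
    (hmaps : ∀ x ∈ T, homothety x t '' U ⊆ U)
    (hdisj : (T : Set E).PairwiseDisjoint fun x ↦ homothety x t '' U) :
    (T.card : ℝ) * t ^ finrank ℝ E ≤ 1 := by
  borelize E
  let μ : Measure E := Measure.addHaar
  have hmeas : ∀ x ∈ T, MeasurableSet (homothety x t '' U) := fun x _ ↦
    (homothety_isOpenMap x t ht.ne' U hUo).measurableSet
  have hcover : (T.card * ENNReal.ofReal (t ^ finrank ℝ E)) * μ U ≤ 1 * μ U :=
    calc (T.card * ENNReal.ofReal (t ^ finrank ℝ E)) * μ U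
        = ∑ x ∈ T, μ (homothety x t '' U) := by
          simp [Measure.addHaar_image_homothety, abs_of_pos ht, mul_assoc]
      _ = μ (⋃ x ∈ T, homothety x t '' U) := (measure_biUnion_finset hdisj hmeas).symm
      _ ≤ 1 * μ U := (one_mul (μ U)).symm ▸ measure_mono (Set.iUnion₂_subset hmaps)
  have := (ENNReal.mul_le_mul_iff_left (hUo.measure_ne_zero μ hUne) hUb.measure_lt_top.ne).1 hcover
  rwa [← ENNReal.ofReal_natCast, ← ENNReal.ofReal_mul (Nat.cast_nonneg _),
    ENNReal.ofReal_le_one] at this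

theorem Finset.card_mul_pow_finrank_le_one_of_pairwise_le_dist (T : Finset E) {r : ℝ}
    (hr : 0 < r) (hsep : (T : Set E).Pairwise fun x y ↦ r ≤ dist x y) {t : ℝ} (ht₀ : 0 < t)
    (ht : t * (r + diam (T : Set E)) < r) :
    (T.card : ℝ) * t ^ finrank ℝ E ≤ 1 := by
  obtain rfl | hTne := T.eq_empty_or_nonempty
  · simp
  set D := diam (T : Set E)
  have ht₁ : t ≤ 1 := by nlinarith [diam_nonneg (s := (T : Set E))]
  set ε := (r - t * (r + D)) / (4 * t)
  have hε : 0 < ε := by positivity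
  set U := thickening ε (convexHull ℝ (T : Set E))
  have hTU : (T : Set E) ⊆ U :=
    (subset_convexHull ℝ _).trans (self_subset_thickening hε _)
  have hUb : IsBounded U := (isBounded_convexHull.2 T.finite_toSet.isBounded).thickening
  have hUdist : ∀ a ∈ U, ∀ b ∈ U, dist a b ≤ D + 2 * ε := fun a ha b hb ↦
    (dist_le_diam_of_mem hUb ha hb).trans <|
      (diam_thickening_le _ hε.le).trans_eq (by rw [convexHull_diam])
  refine card_mul_pow_finrank_le_one_of_pairwiseDisjoint_homothety isOpen_thickening
    (hTne.to_set.mono hTU) hUb ht₀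
    (fun x hx ↦ (convex_convexHull ℝ _).homothety_image_thickening_subset
      (subset_convexHull ℝ _ hx) ht₀.le ht₁ ε)
    (fun x hx y hy hxy ↦ disjoint_homothety_image hUdist ht₀ ht₁ (hsep hx hy hxy) ?_)
  have htε : t * (2 * ε) = (r - t * (r + D)) / 2 := by
    simp only [ε]
    field_simp
    ring
  linarith

theorem Finset.card_le_one_add_diam_div_pow_finrank (T : Finset E) {r : ℝ} (hr : 0 < r)
    (hsep : (T : Set E).Pairwise fun x y ↦ r ≤ dist x y) :
    (T.card : ℝ) ≤ (1 + diam (T : Set E) / r) ^ finrank ℝ E := by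
  set D := diam (T : Set E)
  set c := r / (r + D)
  have hc : 0 < c := by positivity
  have hlim : Tendsto (fun t ↦ (T.card : ℝ) * t ^ finrank ℝ E) (𝓝[<] c)
      (𝓝 (T.card * c ^ finrank ℝ E)) :=
    ((continuous_const.mul (continuous_pow _)).tendsto c).mono_left nhdsWithin_le_nhds
  have hc_le : (T.card : ℝ) * c ^ finrank ℝ E ≤ 1 := by
    refine le_of_tendsto hlim ?_
    filter_upwards [Ioo_mem_nhdsLT hc] with t ht
    refine T.card_mul_pow_finrank_le_one_of_pairwise_le_dist hr hsep ht.1 ?_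
    rw [← lt_div_iff₀ (by positivity)]
    exact ht.2
  have hinv : 1 + D / r = c⁻¹ := by
    simp only [c]
    field_simp
  rw [hinv, inv_pow, ← one_div]
  exact (le_div_iff₀ (by positivity)).2 hc_le

theorem Finset.card_le_two_pow_finrank_of_pairwise_dist_eq (T : Finset E) {d : ℝ} (hd : 0 < d)
    (hT : (T : Set E).Pairwise fun x y ↦ dist x y = d) :
    T.card ≤ 2 ^ finrank ℝ E := by
  have hdiam : diam (T : Set E) ≤ d := diam_le_of_forall_dist_le hd.le fun x hx y hy ↦ by
    obtain rfl | hxy := eq_or_ne x y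
    · simpa using hd.le
    · exact (hT hx hy hxy).le
  have hbase : 1 + diam (T : Set E) / d ≤ 2 := by
    linarith [(div_le_one hd).2 hdiam]
  have := (T.card_le_one_add_diam_div_pow_finrank hd fun x hx y hy hxy ↦ (hT hx hy hxy).ge).trans
    (pow_le_pow_left₀ (by positivity) hbase _)
  exact_mod_cast this

end

/-- **Petty, P. S. Soltan (via Danzer–Grünbaum).** An equilateral set in an
`n`-dimensional real normed (Minkowski) space has at most `2^n` points. -/
theorem equilateral_set_card_le (n : ℕ) (M : Type*)
    [NormedAddCommGroup M] [NormedSpace ℝ M] [FiniteDimensional ℝ M]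
    (hdim : Module.finrank ℝ M = n)
    (S : Set M) (d : ℝ) (hd : 0 < d)
    (hS : ∀ x ∈ S, ∀ y ∈ S, x ≠ y → dist x y = d) :
    S.Finite ∧ S.ncard ≤ 2 ^ n := by
  have hcard : ∀ T : Finset M, (T : Set M) ⊆ S → T.card ≤ 2 ^ n := fun T hTS ↦
    hdim ▸ T.card_le_two_pow_finrank_of_pairwise_dist_eq hd fun x hx y hy ↦ hS x (hTS hx) y (hTS hy)
  have hfin : S.Finite := by
    by_contra hinf
    obtain ⟨T, hTS, hT⟩ := Set.Infinite.exists_subset_card_eq hinf (2 ^ n + 1)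
    have := hcard T hTS
    omega
  refine ⟨hfin, ?_⟩
  rw [Set.ncard_eq_toFinset_card S hfin]
  exact hcard hfin.toFinset (by simp)
end

section
/- Let M be a real normed vector space of dimension 3. Then there exist four points in M whose pairwise distances are all equal to some common d > 0. -/
/-!
Fix a unit vector `v` and let `C` be the set of unit vectors at distance `1` from `v`. When
`dim ≥ 3`, `C` is connected: projecting to the quotient by `ℝ ∙ v` and normalizing maps the
compact set `C` onto the (connected) unit sphere of a space of dimension `≥ 2`, and each fibre,
the part of `C` in an open half-plane bounded by `ℝ ∙ v`, is an arc, because the distance to `v`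
of the unit vector in a direction of the half-plane decreases as the direction turns towards `v`.
Now `C` is invariant under `x ↦ v - x`, and `v - u` is at distance `≥ 1` from `u ∈ C`, so some
`z ∈ C` is at distance exactly `1` from `u`, and `0, v, u, z` are pairwise at distance `1`.
-/

open NormedSpace Metric Set Filter Topology Module

theorem IsCompact.isConnected_of_isConnected_fibers {X Y : Type*} [TopologicalSpace X]
    [TopologicalSpace Y] [T2Space Y] {s : Set X} {t : Set Y} {f : X → Y}
    (hs : IsCompact s) (hf : ContinuousOn f s) (hst : MapsTo f s t) (ht : IsConnected t)
    (hfib : ∀ y ∈ t, IsConnected (s ∩ f ⁻¹' {y})) : IsConnected s := by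
  have : CompactSpace s := isCompact_iff_compactSpace.1 hs
  have : ConnectedSpace t := isConnected_iff_connectedSpace.1 ht
  set g : s → t := hst.restrict f s t
  have hg_cont : Continuous g := hf.mapsToRestrict hst
  have hg_fib (y : t) : IsConnected (g ⁻¹' {y}) := by
    have himg : Subtype.val '' (g ⁻¹' {y}) = s ∩ f ⁻¹' {y.1} := by
      ext x
      simp [g, Subtype.ext_iff, and_comm]
    obtain ⟨hne, hpre⟩ := hfib y y.2
    rw [← himg] at hne hpre
    exact ⟨hne.of_image, Topology.IsInducing.subtypeVal.isPreconnected_image.1 hpre⟩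
  have hg : IsCoinducing g :=
    (hg_cont.isClosedMap.isQuotientMap hg_cont fun y => (hg_fib y).nonempty).isCoinducing
  have hconn := hg.isConnected_preimage_of_isClosed hg_fib isClosed_univ isConnected_univ
  rw [preimage_univ] at hconn
  exact isConnected_iff_connectedSpace.2 (connectedSpace_iff_univ.2 hconn)

section NormedSpace

variable {E : Type*} [NormedAddCommGroup E] [NormedSpace ℝ E]

theorem continuousAt_normalize {x : E} (hx : x ≠ 0) : ContinuousAt (normalize : E → E) x :=
  (continuousAt_id.norm.inv₀ (norm_ne_zero_iff.2 hx)).smul continuousAt_id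

theorem norm_sub_le_norm_sub_of_smul_eq_smul_add_smul {v x y : E} (hv : ‖v‖ = 1)
    (hx : ‖x‖ = 1) (hy : ‖y‖ = 1) {a b c : ℝ} (ha : 0 ≤ a) (hb : 0 ≤ b) (hc : 0 ≤ c)
    (hbc : 0 < b + c) (h : a • x = b • v + c • y) : ‖x - v‖ ≤ ‖y - v‖ := by
  have hax : ‖a • x‖ = a := by rw [norm_smul, hx, mul_one, Real.norm_of_nonneg ha]
  have ha_le : a ≤ b + c :=
    calc a = ‖b • v + c • y‖ := by rw [← h, hax]
      _ ≤ ‖b • v‖ + ‖c • y‖ := norm_add_le _ _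
      _ = b + c := by
        rw [norm_smul, norm_smul, hv, hy, Real.norm_of_nonneg hb, Real.norm_of_nonneg hc,
          mul_one, mul_one]
  have hdefect : b + c - a ≤ b * ‖y - v‖ :=
    calc b + c - a = ‖(b + c) • y‖ - ‖a • x‖ := by
          rw [hax, norm_smul, hy, Real.norm_of_nonneg hbc.le, mul_one]
      _ ≤ ‖(b + c) • y - a • x‖ := norm_sub_norm_le _ _
      _ = b * ‖y - v‖ := by
        rw [h, show (b + c) • y - (b • v + c • y) = b • (y - v) by module, norm_smul,
          Real.norm_of_nonneg hb]
  refine le_of_mul_le_mul_left ?_ hbc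
  calc (b + c) * ‖x - v‖ = ‖(b + c - a) • x + c • (y - v)‖ := by
        rw [← norm_smul_of_nonneg hbc.le]
        congr 1
        linear_combination (norm := module) h
    _ ≤ (b + c - a) + c * ‖y - v‖ := by
        refine (norm_add_le _ _).trans_eq ?_
        rw [norm_smul, norm_smul, hx, mul_one, Real.norm_of_nonneg (by linarith),
          Real.norm_of_nonneg hc]
    _ ≤ (b + c) * ‖y - v‖ := by linarith

section HalfPlane

variable {v e : E}

theorem smul_add_ne_zero_of_notMem_span_singleton (he : e ∉ ℝ ∙ v) (s : ℝ) : s • v + e ≠ 0 :=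
  fun h => he (Submodule.mem_span_singleton.2 ⟨-s, by rw [neg_smul, neg_eq_iff_add_eq_zero, h]⟩)

theorem continuous_normalize_smul_add (he : e ∉ ℝ ∙ v) :
    Continuous fun s : ℝ => normalize (s • v + e) :=
  continuous_iff_continuousAt.2 fun s =>
    (continuousAt_normalize (smul_add_ne_zero_of_notMem_span_singleton he s)).comp
      (f := fun s : ℝ => s • v + e) (by fun_prop)

theorem tendsto_normalize_smul_add_atTop (hv : v ≠ 0) :
    Tendsto (fun s : ℝ => normalize (s • v + e)) atTop (𝓝 (normalize v)) := by
  have hlim : Tendsto (fun s : ℝ => v + s⁻¹ • e) atTop (𝓝 v) := by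
    simpa using tendsto_const_nhds.add ((tendsto_inv_atTop_zero (𝕜 := ℝ)).smul_const e)
  refine ((continuousAt_normalize hv).tendsto.comp hlim).congr' ?_
  filter_upwards [eventually_gt_atTop 0] with s hs
  rw [Function.comp_apply, ← normalize_smul_of_pos hs, smul_add, smul_smul,
    mul_inv_cancel₀ hs.ne', one_smul]

theorem antitone_norm_normalize_smul_add_sub (hv : ‖v‖ = 1) (he : e ∉ ℝ ∙ v) :
    Antitone fun s : ℝ => ‖normalize (s • v + e) - v‖ := by
  have hne := smul_add_ne_zero_of_notMem_span_singleton he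
  intro s₂ s₁ hs
  -- `s₁ • v + e = (s₁ - s₂) • v + (s₂ • v + e)` lies in the cone spanned by `v` and `s₂ • v + e`
  refine norm_sub_le_norm_sub_of_smul_eq_smul_add_smul hv (norm_normalize (hne s₁))
    (norm_normalize (hne s₂)) (norm_nonneg (s₁ • v + e)) (sub_nonneg.2 hs)
    (norm_nonneg (s₂ • v + e))
    (add_pos_of_nonneg_of_pos (sub_nonneg.2 hs) (norm_pos_iff.2 (hne s₂))) ?_
  rw [norm_smul_normalize, norm_smul_normalize]
  module

theorem exists_norm_normalize_smul_add_sub_eq_one (hv : ‖v‖ = 1) (he : e ∉ ℝ ∙ v) :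
    ∃ s : ℝ, ‖normalize (s • v + e) - v‖ = 1 := by
  have hv₀ : v ≠ 0 := ne_zero_of_norm_ne_zero (by rw [hv]; exact one_ne_zero)
  have htop : Tendsto (fun s : ℝ => ‖normalize (s • v + e) - v‖) atTop (𝓝 0) := by
    simpa [normalize_eq_self_of_norm_eq_one hv] using
      ((tendsto_normalize_smul_add_atTop (e := e) hv₀).sub_const v).norm
  have hbot : Tendsto (fun s : ℝ => ‖normalize (s • v + e) - v‖) atBot (𝓝 2) := by
    have hneg := (tendsto_normalize_smul_add_atTop (e := e) (neg_ne_zero.2 hv₀)).comp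
      tendsto_neg_atBot_atTop
    simp only [Function.comp_def, normalize_neg, normalize_eq_self_of_norm_eq_one hv,
      neg_smul_neg] at hneg
    convert (hneg.sub_const v).norm using 2
    rw [show -v - v = (-2 : ℝ) • v by module, norm_smul, hv]
    norm_num
  obtain ⟨s₁, hs₁⟩ := (htop.eventually (gt_mem_nhds (show (0 : ℝ) < 1 from one_pos))).exists
  obtain ⟨s₂, hs₂⟩ := (hbot.eventually (lt_mem_nhds (show (1 : ℝ) < 2 from one_lt_two))).exists
  obtain ⟨s, -, hs⟩ := intermediate_value_uIcc
    ((continuous_normalize_smul_add he).sub continuous_const).norm.continuousOn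
    (mem_uIcc_of_le hs₁.le hs₂.le)
  exact ⟨s, hs⟩

theorem isConnected_sphere_inter_sphere_inter_halfPlane (hv : ‖v‖ = 1) (he : e ∉ ℝ ∙ v) :
    IsConnected (sphere 0 1 ∩ sphere v 1 ∩ {x | ∃ a r : ℝ, 0 < r ∧ a • v + r • e = x}) := by
  have hne := smul_add_ne_zero_of_notMem_span_singleton he
  set φ : ℝ → E := fun s => normalize (s • v + e)
  have himage : sphere 0 1 ∩ sphere v 1 ∩ {x | ∃ a r : ℝ, 0 < r ∧ a • v + r • e = x} =
      φ '' ((fun s => ‖φ s - v‖) ⁻¹' {1}) := by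
    ext x
    constructor
    · rintro ⟨⟨hx₀, hxv⟩, a, r, hr, rfl⟩
      have hφ : φ (a / r) = a • v + r • e := by
        rw [show φ (a / r) = normalize (r⁻¹ • (a • v + r • e)) by
            simp only [φ, smul_add, smul_smul, inv_mul_cancel₀ hr.ne', one_smul, div_eq_inv_mul],
          normalize_smul_of_pos (inv_pos.2 hr),
          normalize_eq_self_of_norm_eq_one (mem_sphere_zero_iff_norm.1 hx₀)]
      exact ⟨a / r, by simpa [hφ, mem_sphere_iff_norm] using hxv, hφ⟩
    · rintro ⟨s, hs, rfl⟩
      refine ⟨⟨mem_sphere_zero_iff_norm.2 (norm_normalize (hne s)),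
        by simpa [mem_sphere_iff_norm] using hs⟩, ‖s • v + e‖⁻¹ * s, ‖s • v + e‖⁻¹,
        inv_pos.2 (norm_pos_iff.2 (hne s)), ?_⟩
      simp only [φ, NormedSpace.normalize, smul_add, smul_smul]
  rw [himage]
  obtain ⟨s, hs⟩ := exists_norm_normalize_smul_add_sub_eq_one hv he
  exact ⟨⟨φ s, s, hs, rfl⟩, (ordConnected_singleton.preimage_anti
    (antitone_norm_normalize_smul_add_sub hv he)).isPreconnected.image φ
    (continuous_normalize_smul_add he).continuousOn⟩

end HalfPlane

theorem notMem_span_singleton_of_mem_sphere_inter_sphere {v x : E} (hv : ‖v‖ = 1)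
    (hx : x ∈ sphere 0 1 ∩ sphere v 1) : x ∉ ℝ ∙ v := by
  intro hxv
  obtain ⟨a, rfl⟩ := Submodule.mem_span_singleton.1 hxv
  obtain ⟨h₀, h₁⟩ := hx
  rw [mem_sphere_zero_iff_norm, norm_smul, hv, mul_one, Real.norm_eq_abs] at h₀
  rw [mem_sphere_iff_norm, show a • v - v = (a - 1) • v by module, norm_smul, hv, mul_one,
    Real.norm_eq_abs] at h₁
  cases abs_cases a <;> cases abs_cases (a - 1) <;> linarith

theorem normalize_apply_eq_apply_iff {F : Type*} [NormedAddCommGroup F] [NormedSpace ℝ F]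
    {π : E →ₗ[ℝ] F} {v e x : E} (hπ : LinearMap.ker π = ℝ ∙ v) (he : ‖π e‖ = 1)
    (hx : π x ≠ 0) : normalize (π x) = π e ↔ ∃ a r : ℝ, 0 < r ∧ a • v + r • e = x := by
  constructor
  · intro h
    have hmem : x - ‖π x‖ • e ∈ ℝ ∙ v := by
      rw [← hπ, LinearMap.mem_ker, map_sub, map_smul, ← h, norm_smul_normalize, sub_self]
    obtain ⟨a, ha⟩ := Submodule.mem_span_singleton.1 hmem
    exact ⟨a, ‖π x‖, norm_pos_iff.2 hx, by rw [ha, sub_add_cancel]⟩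
  · rintro ⟨a, r, hr, rfl⟩
    have hv : π v = 0 := by
      rw [← LinearMap.mem_ker, hπ]
      exact Submodule.mem_span_singleton_self v
    rw [map_add, map_smul, map_smul, hv, smul_zero, zero_add, normalize_smul_of_pos hr,
      normalize_eq_self_of_norm_eq_one he]

theorem isConnected_sphere_inter_sphere [FiniteDimensional ℝ E] (hE : 2 < finrank ℝ E)
    {v : E} (hv : ‖v‖ = 1) : IsConnected (sphere (0 : E) 1 ∩ sphere v 1) := by
  -- makes the quotient seminorm on `E ⧸ ℝ ∙ v` a norm
  have : IsClosed ((ℝ ∙ v : Submodule ℝ E) : Set E) := Submodule.closed_of_finiteDimensional _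
  set π := (ℝ ∙ v).mkQ
  have hv₀ : v ≠ 0 := ne_zero_of_norm_ne_zero (by rw [hv]; exact one_ne_zero)
  have hQ : 1 < Module.rank ℝ (E ⧸ ℝ ∙ v) := by
    have := (ℝ ∙ v).finrank_quotient_add_finrank
    rw [finrank_span_singleton hv₀] at this
    rw [← Module.finrank_eq_rank]
    exact_mod_cast (by omega : 1 < finrank ℝ (E ⧸ ℝ ∙ v))
  have hπ : ∀ x ∈ sphere (0 : E) 1 ∩ sphere v 1, π x ≠ 0 := fun x hx => by
    rw [Ne, Submodule.mkQ_apply, Submodule.Quotient.mk_eq_zero]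
    exact notMem_span_singleton_of_mem_sphere_inter_sphere hv hx
  refine ((isCompact_sphere 0 1).inter_right isClosed_sphere).isConnected_of_isConnected_fibers
    (f := fun x => normalize (π x)) (fun x hx => ?_) (fun x hx => ?_)
    (isConnected_sphere hQ 0 zero_le_one) (fun ω hω => ?_)
  · exact ((continuousAt_normalize (hπ x hx)).comp
      π.continuous_of_finiteDimensional.continuousAt).continuousWithinAt
  · exact mem_sphere_zero_iff_norm.2 (norm_normalize (hπ x hx))
  obtain ⟨e, rfl⟩ := Submodule.mkQ_surjective _ ω
  have he : ‖π e‖ = 1 := mem_sphere_zero_iff_norm.1 hω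
  have hfiber : sphere 0 1 ∩ sphere v 1 ∩ (fun x => normalize (π x)) ⁻¹' {π e} =
      sphere 0 1 ∩ sphere v 1 ∩ {x | ∃ a r : ℝ, 0 < r ∧ a • v + r • e = x} := by
    ext x
    simp only [mem_inter_iff, mem_preimage, mem_singleton_iff]
    exact and_congr_right fun hx =>
      normalize_apply_eq_apply_iff (Submodule.ker_mkQ _) he (hπ x hx)
  rw [hfiber]
  refine isConnected_sphere_inter_sphere_inter_halfPlane hv fun he' => ?_
  simp [π, (Submodule.Quotient.mk_eq_zero _).2 he'] at he

theorem exists_mem_sphere_inter_sphere_dist_eq_one {v u : E} (hv : ‖v‖ = 1)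
    (hC : IsPreconnected (sphere (0 : E) 1 ∩ sphere v 1)) (hu : u ∈ sphere 0 1 ∩ sphere v 1) :
    ∃ z ∈ sphere 0 1 ∩ sphere v 1, dist z u = 1 := by
  obtain ⟨hu₀, huv⟩ := hu
  have hvu : v - u ∈ sphere 0 1 ∩ sphere v 1 := by
    rw [mem_inter_iff, mem_sphere_iff_norm, mem_sphere_iff_norm, sub_zero, norm_sub_rev,
      sub_sub_cancel_left, norm_neg]
    exact ⟨mem_sphere_iff_norm.1 huv, mem_sphere_zero_iff_norm.1 hu₀⟩
  have hvu_far : 1 ≤ dist (v - u) u :=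
    calc 1 = ‖u + u‖ - ‖v‖ := by
          rw [← two_smul ℝ u, norm_smul, mem_sphere_zero_iff_norm.1 hu₀, hv]; norm_num
      _ ≤ ‖u + u - v‖ := norm_sub_norm_le _ _
      _ = dist (v - u) u := by rw [dist_eq_norm, ← norm_neg]; congr 1; abel
  obtain ⟨z, hz, hzu⟩ := hC.intermediate_value ⟨hu₀, huv⟩ hvu (f := fun x => dist x u)
    (continuous_id.dist continuous_const).continuousOn ⟨by simp, hvu_far⟩
  exact ⟨z, hz, hzu⟩

end NormedSpace

/-- **Petty's theorem in dimension 3.** Every 3-dimensional real normed (Minkowski)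
space contains four points whose pairwise distances are all equal to some `d > 0`. -/
theorem equilateral_four_points_dim_three (M : Type*)
    [NormedAddCommGroup M] [NormedSpace ℝ M] [FiniteDimensional ℝ M]
    (hdim : Module.finrank ℝ M = 3) :
    ∃ (p : Fin 4 → M) (d : ℝ), 0 < d ∧
      ∀ i j, i ≠ j → dist (p i) (p j) = d := by
  have : Nontrivial M := Module.nontrivial_of_finrank_eq_succ hdim
  obtain ⟨v, hv⟩ := exists_norm_eq M zero_le_one
  have hC := isConnected_sphere_inter_sphere (by omega) hv
  obtain ⟨u, hu⟩ := hC.nonempty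
  obtain ⟨z, ⟨hz₀, hzv⟩, hzu⟩ :=
    exists_mem_sphere_inter_sphere_dist_eq_one hv hC.isPreconnected hu
  obtain ⟨hu₀, huv⟩ := hu
  rw [mem_sphere] at hu₀ huv hz₀ hzv
  have hv₀ : dist v 0 = 1 := by rwa [dist_zero_right]
  refine ⟨![0, v, u, z], 1, one_pos, fun i j hij => ?_⟩
  fin_cases i <;> fin_cases j <;> simp_all [dist_comm]
end
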